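/- For every integer k ≥ 2 there exists a unital homomorphism α: M_k(ℂ) → M_k(C(S¹)) which cannot be extended over the disk; that is, there is no unital homomorphism ᾱ: M_k(ℂ) → M_k(C(D)), where D is the closed unit disk with boundary S¹, such that π ∘ ᾱ = α, where π: M_k(C(D)) → M_k(C(S¹)) is the restriction map to the boundary. -/

import Mathlib

noncomputable section

open scoped Matrix.Norms.L2Operator Kronecker
open Matrix

/-- `n × n` complex matrices, endowed (via the scoped `Matrix.L2OpNorm` instances)
with the operator norm, i.e. regarded as a C*-algebra. -/
abbrev Mat (n : ℕ) : Type := Matrix (Fin n) (Fin n) ℂ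

/-- `(l·k) × (l·k)` complex matrices, indexed by pairs. -/
abbrev MatP (l k : ℕ) : Type := Matrix (Fin l × Fin k) (Fin l × Fin k) ℂ

/-- A projection in a `*`-algebra: a self-adjoint idempotent. -/
def IsProj' {A : Type*} [Mul A] [Star A] (p : A) : Prop := p * p = p ∧ star p = p

/-- The Elliott dimension drop interval algebra `I_k`, realized as the star subalgebra of
`C([0,1], M_k(ℂ))` of functions which are scalar multiples of `1_k` at both endpoints. -/
def dimDrop (k : ℕ) : StarSubalgebra ℂ C(unitInterval, Mat k) where
  carrier := {f | (∃ c : ℂ, f 0 = c • (1 : Mat k)) ∧ (∃ c : ℂ, f 1 = c • (1 : Mat k))}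
  mul_mem' := by
    rintro f g ⟨⟨c, hc⟩, ⟨d, hd⟩⟩ ⟨⟨c', hc'⟩, ⟨d', hd'⟩⟩
    refine ⟨⟨c * c', ?_⟩, ⟨d * d', ?_⟩⟩ <;>
      simp [hc, hd, hc', hd', smul_smul, smul_mul_assoc, mul_smul_comm, mul_comm]
  one_mem' := ⟨⟨1, by simp⟩, ⟨1, by simp⟩⟩
  add_mem' := by
    rintro f g ⟨⟨c, hc⟩, ⟨d, hd⟩⟩ ⟨⟨c', hc'⟩, ⟨d', hd'⟩⟩
    exact ⟨⟨c + c', by simp [hc, hc', add_smul]⟩, ⟨d + d', by simp [hd, hd', add_smul]⟩⟩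
  zero_mem' := ⟨⟨0, by simp⟩, ⟨0, by simp⟩⟩
  algebraMap_mem' := fun r =>
    ⟨⟨r, by simp [Algebra.algebraMap_eq_smul_one]⟩, ⟨r, by simp [Algebra.algebraMap_eq_smul_one]⟩⟩
  star_mem' := by
    rintro f ⟨⟨c, hc⟩, ⟨d, hd⟩⟩
    exact ⟨⟨starRingEnd ℂ c, by simp [hc]⟩, ⟨starRingEnd ℂ d, by simp [hd]⟩⟩

/-- The scalar value of `f ∈ I_k` at an endpoint (`f(0̲)` resp. `f(1̲)`), recovered via the
normalized trace. -/
def scalarAt {k : ℕ} (f : ↥(dimDrop k)) (t : unitInterval) : ℂ :=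
  Matrix.trace ((f : C(unitInterval, Mat k)) t) / (k : ℂ)

/-- The canonical unital inclusion `C[0,1] → I_k`, `g ↦ g · 1_k`. -/
def scalarEmb (k : ℕ) (g : C(unitInterval, ℂ)) : ↥(dimDrop k) :=
  ⟨⟨fun t => g t • (1 : Mat k), (map_continuous g).smul continuous_const⟩,
   ⟨⟨g 0, rfl⟩, ⟨g 1, rfl⟩⟩⟩

/-- The algebra `I_k|_{[0,s₀]}`: continuous `M_k(ℂ)`-valued functions on `[0, s₀]` that are a
scalar multiple of `1_k` at `0`. -/
def dimDropZero (k : ℕ) {s₀ : ℝ} (hs : 0 ≤ s₀) :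
    StarSubalgebra ℂ C(↥(Set.Icc (0:ℝ) s₀), Mat k) where
  carrier := {f | ∃ c : ℂ, f ⟨0, Set.left_mem_Icc.2 hs⟩ = c • (1 : Mat k)}
  mul_mem' := by
    rintro f g ⟨c, hc⟩ ⟨c', hc'⟩
    exact ⟨c * c', by simp [hc, hc', smul_smul, smul_mul_assoc, mul_smul_comm, mul_comm]⟩
  one_mem' := ⟨1, by simp⟩
  add_mem' := by
    rintro f g ⟨c, hc⟩ ⟨c', hc'⟩
    exact ⟨c + c', by simp [hc, hc', add_smul]⟩
  zero_mem' := ⟨0, by simp⟩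
  algebraMap_mem' := fun r => ⟨r, by simp [Algebra.algebraMap_eq_smul_one]⟩
  star_mem' := by
    rintro f ⟨c, hc⟩
    exact ⟨starRingEnd ℂ c, by simp [hc]⟩

/-- The scalar value `f(0̲)` for `f ∈ I_k|_{[0,s₀]}`, recovered via the normalized trace. -/
def scalarAtZero {k : ℕ} {s₀ : ℝ} {hs : 0 ≤ s₀} (f : ↥(dimDropZero k hs)) : ℂ :=
  Matrix.trace ((f : C(↥(Set.Icc (0:ℝ) s₀), Mat k)) ⟨0, Set.left_mem_Icc.2 hs⟩) / (k : ℂ)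

/-- The canonical unital inclusion `C[0,s₀] → I_k|_{[0,s₀]}`, `g ↦ g · 1_k`. -/
def scalarEmbZero (k : ℕ) {s₀ : ℝ} (hs : 0 ≤ s₀) (g : C(↥(Set.Icc (0:ℝ) s₀), ℂ)) :
    ↥(dimDropZero k hs) :=
  ⟨⟨fun t => g t • (1 : Mat k), (map_continuous g).smul continuous_const⟩,
   ⟨g ⟨0, Set.left_mem_Icc.2 hs⟩, rfl⟩⟩

/-- The block-scalar matrix `a ⊗ 1_k ∈ M_l(ℂ) ⊗ M_k(ℂ) = M_{lk}(ℂ)`. -/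
def blockScalar (l k : ℕ) (a : Matrix (Fin l) (Fin l) ℂ) : MatP l k :=
  a ⊗ₖ (1 : Mat k)

lemma blockScalar_mul (l k : ℕ) (a b : Matrix (Fin l) (Fin l) ℂ) :
    blockScalar l k a * blockScalar l k b = blockScalar l k (a * b) := by
  unfold blockScalar
  rw [← Matrix.mul_kronecker_mul, Matrix.one_mul]

lemma star_blockScalar (l k : ℕ) (a : Matrix (Fin l) (Fin l) ℂ) :
    star (blockScalar l k a) = blockScalar l k (star a) := by
  show (blockScalar l k a)ᴴ = blockScalar l k aᴴ
  ext ⟨i, s⟩ ⟨j, t⟩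
  by_cases h : s = t <;>
    simp [blockScalar, Matrix.conjTranspose_apply, Matrix.one_apply, h, eq_comm]

/-- The algebra `M_l(I_k)`, realized as the star subalgebra of `C([0,1], M_{lk}(ℂ))` of
functions whose values at `0` and at `1` are of the form `a ⊗ 1_k` with `a ∈ M_l(ℂ)`. -/
def dimDropMat (l k : ℕ) : StarSubalgebra ℂ C(unitInterval, MatP l k) where
  carrier := {f | (∃ a, f 0 = blockScalar l k a) ∧ (∃ a, f 1 = blockScalar l k a)}
  mul_mem' := by
    rintro f g ⟨⟨a, ha⟩, ⟨b, hb⟩⟩ ⟨⟨a', ha'⟩, ⟨b', hb'⟩⟩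
    refine ⟨⟨a * a', ?_⟩, ⟨b * b', ?_⟩⟩ <;>
      simp [ha, hb, ha', hb', blockScalar_mul]
  one_mem' := ⟨⟨1, by simp [blockScalar, Matrix.one_kronecker_one]⟩,
    ⟨1, by simp [blockScalar, Matrix.one_kronecker_one]⟩⟩
  add_mem' := by
    rintro f g ⟨⟨a, ha⟩, ⟨b, hb⟩⟩ ⟨⟨a', ha'⟩, ⟨b', hb'⟩⟩
    exact ⟨⟨a + a', by simp [ha, ha', blockScalar, Matrix.add_kronecker]⟩,
      ⟨b + b', by simp [hb, hb', blockScalar, Matrix.add_kronecker]⟩⟩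
  zero_mem' := ⟨⟨0, by simp [blockScalar, Matrix.zero_kronecker]⟩,
    ⟨0, by simp [blockScalar, Matrix.zero_kronecker]⟩⟩
  algebraMap_mem' := fun r =>
    ⟨⟨r • 1, by simp [blockScalar, Matrix.smul_kronecker, Matrix.one_kronecker_one,
        Algebra.algebraMap_eq_smul_one]⟩,
     ⟨r • 1, by simp [blockScalar, Matrix.smul_kronecker, Matrix.one_kronecker_one,
        Algebra.algebraMap_eq_smul_one]⟩⟩
  star_mem' := by
    rintro f ⟨⟨a, ha⟩, ⟨b, hb⟩⟩
    exact ⟨⟨star a, by simp [ha, ← star_blockScalar]⟩,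
      ⟨star b, by simp [hb, ← star_blockScalar]⟩⟩

/-- `β` is simultaneously diagonalized by a unitary `u`, with spectrum the family `x`
(with multiplicity): `β g = u · diag(g(x i)) · u*` for all `g`. -/
def DiagRep {Z : Type*} [TopologicalSpace Z] {ι : Type*} [Fintype ι] [DecidableEq ι]
    (β : C(Z, ℂ) → Matrix ι ι ℂ) (x : ι → Z) : Prop :=
  ∃ u ∈ unitary (Matrix ι ι ℂ), ∀ g : C(Z, ℂ),
    β g = u * Matrix.diagonal (fun i => g (x i)) * star u

/-- `β` is represented at a point of the corner algebra `P M_N(ℂ) P` with spectrum `t` and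
mutually orthogonal rank-one projections `p` summing to `P`. -/
def CornerRep {Z : Type*} [TopologicalSpace Z] {N n : ℕ}
    (β : C(Z, ℂ) → Mat N) (P : Mat N) (t : Fin n → Z) (p : Fin n → Mat N) : Prop :=
  (∀ i, IsProj' (p i) ∧ (p i).rank = 1) ∧
  (Pairwise fun i j => p i * p j = 0) ∧
  (∑ i, p i) = P ∧
  ∀ g : C(Z, ℂ), β g = ∑ i, g (t i) • p i

/-- Two `ι`-indexed families of points of a metric space can be paired within `η`. -/
def PairedWithin {α : Type*} [PseudoMetricSpace α] {ι : Type*} (x y : ι → α) (η : ℝ) : Prop :=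
  ∃ σ : Equiv.Perm ι, ∀ i, dist (x i) (y (σ i)) < η

/-- `X` is (homeomorphic to) the underlying space of a finite simplicial complex. -/
def FinComplex (X : Type*) [TopologicalSpace X] : Prop :=
  ∃ (d : ℕ) (K : Geometry.SimplicialComplex ℝ (EuclideanSpace ℝ (Fin d))),
    K.faces.Finite ∧ Nonempty (X ≃ₜ ↥K.space)

/-- `X` is (homeomorphic to) the underlying space of a finite simplicial complex of
dimension at most `m`. -/
def FinComplexDim (X : Type*) [TopologicalSpace X] (m : ℕ) : Prop :=
  ∃ (d : ℕ) (K : Geometry.SimplicialComplex ℝ (EuclideanSpace ℝ (Fin d))),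
    K.faces.Finite ∧ (∀ s ∈ K.faces, s.card ≤ m + 1) ∧ Nonempty (X ≃ₜ ↥K.space)

/-- The continuous inclusion of a subset into a larger subset. -/
def setIncl {α : Type*} [TopologicalSpace α] {s t : Set α} (h : s ⊆ t) : C(↥s, ↥t) :=
  ⟨fun x => ⟨x.1, h x.2⟩, (continuous_subtype_val).subtype_mk _⟩

/-- A tracial state on a complex star algebra. -/
def IsTracialState {A : Type*} [Ring A] [Algebra ℂ A] [StarRing A] (τ : A →ₗ[ℂ] ℂ) : Prop :=
  τ 1 = 1 ∧ (∀ a, 0 ≤ (τ (star a * a)).re ∧ (τ (star a * a)).im = 0) ∧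
    ∀ a b, τ (a * b) = τ (b * a)

/-- The complexification `C(X, ℝ) → C(X, ℂ)` (identification `Aff T C(X) = C_ℝ(X)`). -/
def toComplexC {X : Type*} [TopologicalSpace X] (h : C(X, ℝ)) : C(X, ℂ) :=
  ⟨fun x => (h x : ℂ), Complex.continuous_ofReal.comp h.continuous⟩

/-- The spectral distribution property `sdp(η₀, δ)` for a unital homomorphism
`φ : C(X) → M_K(I_k)`: at every point `y` of the spectrum of `M_K(I_k)`, every open
`η₀`-ball in `X` catches at least the fraction `δ` of `Sp φ_y` (counted with multiplicity,
as a homomorphism into `M_{Kk}(C[0,1])`). -/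
def HasSdpMat {X : Type*} [MetricSpace X] {K k : ℕ}
    (φ : C(X, ℂ) →⋆ₐ[ℂ] ↥(dimDropMat K k)) (η₀ δ : ℝ) : Prop :=
  ∀ (x₀ : X) (y : unitInterval) (x : Fin K × Fin k → X),
    DiagRep (fun f => (φ f : C(unitInterval, MatP K k)) y) x →
    δ * (K * k) ≤ ((Finset.univ.filter fun q => dist (x q) x₀ < η₀).card : ℝ)

/-- The 1-skeleton of a simplicial complex. -/
def oneSkeleton {E : Type*} [AddCommGroup E] [Module ℝ E]
    (K : Geometry.SimplicialComplex ℝ E) : Set E :=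
  ⋃ s ∈ {s ∈ K.faces | s.card ≤ 2}, convexHull ℝ (s : Set E)

/-- The index grouping used to describe the multiset
`Θ(y) = {a₁(y)^{∼l₂k}, …, a_{l₁-1}(y)^{∼l₂k}, a_{l₁}(y)^{∼(l₂+r)k}}`. -/
def groupIdx (l₁ l₂ r : ℕ) (h : 0 < l₁) (i : Fin (l₁ * l₂ + r)) : Fin l₁ :=
  ⟨min ((i : ℕ) / l₂) (l₁ - 1), lt_of_le_of_lt (min_le_right _ _) (Nat.sub_lt h Nat.one_pos)⟩

instance : CompactSpace ↥(Metric.closedBall (0:ℂ) 1) :=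
  isCompact_iff_compactSpace.mp (isCompact_closedBall _ _)

/-!
Write `α a y = u y * a * star (u y)` with `u y = diagonal (Pi.mulSingle i y)`, and suppose `ᾱ`
extends `α` over the disk `D`. Since `D` is contractible, the projection field `ᾱ (single i₀ i₀ 1)`
has a nowhere-vanishing continuous section `ξ`: a section of an idempotent field `P` is carried to a
section of any idempotent field `Q` with `‖P - Q‖ < 1` by applying `Q`, and compactness lets us do
this along a homotopy. The vectors `ᾱ (single j i₀ 1) ξ` form a frame, so its determinant `F` is a
nowhere-vanishing function on the simply connected `D` and has a continuous `k`-th root `R`. On the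
boundary `ξ = λ • e_{i₀}` and `F y = y * λ y ^ k`, so `R / λ` would be a continuous `k`-th root of
the identity of the circle, which does not exist for `k ≥ 2`.
-/

section FixedSections

variable {n : Type*} [Fintype n] {X : Type*} [TopologicalSpace X]

def IsNonvanishingSection (p : C(X, Matrix n n ℂ)) (ξ : C(X, n → ℂ)) : Prop :=
  ∀ x, p x *ᵥ ξ x = ξ x ∧ ξ x ≠ 0

variable [DecidableEq n]

theorem Matrix.mulVec_ne_zero_of_norm_sub_lt_one {P Q : Matrix n n ℂ} (hPQ : ‖P - Q‖ < 1)
    {v : n → ℂ} (hv : P *ᵥ v = v) (hv0 : v ≠ 0) : Q *ᵥ v ≠ 0 := by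
  intro hQv
  have hunit : IsUnit (1 - (P - Q)) := (Units.oneSub _ hPQ).isUnit
  refine hv0 (mulVec_injective_iff_isUnit.mpr hunit ?_)
  simp [sub_mulVec, hv, hQv]

theorem IsNonvanishingSection.exists_of_dist_lt_one [CompactSpace X]
    {p q : C(X, Matrix n n ℂ)} (hq : ∀ x, q x * q x = q x) (hpq : dist p q < 1)
    {ξ : C(X, n → ℂ)} (hξ : IsNonvanishingSection p ξ) :
    ∃ η, IsNonvanishingSection q η := by
  refine ⟨⟨fun x => q x *ᵥ ξ x, by fun_prop⟩, fun x => ⟨?_, ?_⟩⟩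
  · simp [mulVec_mulVec, hq]
  · have hclose : ‖p x - q x‖ < 1 := by
      rw [← dist_eq_norm]; exact (ContinuousMap.dist_apply_le_dist x).trans_lt hpq
    exact Matrix.mulVec_ne_zero_of_norm_sub_lt_one hclose (hξ x).1 (hξ x).2

theorem exists_isNonvanishingSection_of_path [CompactSpace X] {T : Type*} [TopologicalSpace T]
    [PreconnectedSpace T] (γ : C(T, C(X, Matrix n n ℂ)))
    (hγ : ∀ t x, γ t x * γ t x = γ t x) (s t : T)
    (hs : ∃ ξ, IsNonvanishingSection (γ s) ξ) : ∃ ξ, IsNonvanishingSection (γ t) ξ := by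
  refine PreconnectedSpace.induction₂' (fun s t => (∃ ξ, IsNonvanishingSection (γ s) ξ) →
    ∃ ξ, IsNonvanishingSection (γ t) ξ) (fun s => ?_) ⟨fun _ _ _ h₁ h₂ h => h₂ (h₁ h)⟩ s t hs
  filter_upwards [(γ.continuous.tendsto s).eventually (Metric.ball_mem_nhds _ one_pos)] with t ht
  exact ⟨fun ⟨_, h⟩ => h.exists_of_dist_lt_one (hγ t) (dist_comm (γ t) _ ▸ ht),
    fun ⟨_, h⟩ => h.exists_of_dist_lt_one (hγ s) ht⟩

theorem exists_isNonvanishingSection_of_contractible [CompactSpace X] [ContractibleSpace X]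
    (p : C(X, Matrix n n ℂ)) (hp : ∀ x, p x * p x = p x) (hp0 : ∀ x, p x ≠ 0) :
    ∃ ξ, IsNonvanishingSection p ξ := by
  obtain ⟨x₀, ⟨H⟩⟩ := id_nullhomotopic X
  let γ := (p.comp H.toContinuousMap).curry
  have hγ0 : γ 0 = p := by ext x : 1; simp [γ]
  have hγ1 : γ 1 = .const X (p x₀) := by ext x : 1; simp [γ]
  obtain ⟨w, hw⟩ : ∃ w, p x₀ *ᵥ w ≠ 0 := by
    by_contra! h
    exact hp0 x₀ (ext_of_mulVec_single fun i => by rw [h, zero_mulVec])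
  have hsection : IsNonvanishingSection (γ 1) (.const X (p x₀ *ᵥ w)) := fun x => by
    simp [hγ1, mulVec_mulVec, hp, hw]
  simpa [hγ0] using exists_isNonvanishingSection_of_path γ (fun t x => hp _) 1 0 ⟨_, hsection⟩

end FixedSections

section Roots

open Complex Polynomial
open scoped Real

theorem exists_continuous_pow_eq {A : Type*} [TopologicalSpace A] [SimplyConnectedSpace A]
    [LocallyPathConnectedSpace A] (f : C(A, ℂ)) (hf : ∀ a, f a ≠ 0) {k : ℕ} (hk : k ≠ 0) :
    ∃ r : C(A, ℂ), ∀ a, r a ^ k = f a := by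
  obtain ⟨a₀⟩ : Nonempty A := inferInstance
  obtain ⟨G, ⟨-, hG⟩, -⟩ :=
    isCoveringMapOn_exp.existsUnique_continuousMap_lifts f (exp_log (hf a₀)) hf
  refine ⟨⟨fun a => exp (G a / k), by fun_prop⟩, fun a => ?_⟩
  rw [ContinuousMap.coe_mk, ← exp_nat_mul, mul_div_cancel₀ _ (Nat.cast_ne_zero.mpr hk)]
  exact congrFun hG a

theorem not_exists_continuous_pow_eq_coe_sphere {k : ℕ} (hk : 2 ≤ k) :
    ¬ ∃ ν : C(Metric.sphere (0:ℂ) 1, ℂ), ∀ y, ν y ^ k = y := by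
  rintro ⟨ν, hν⟩
  have hk0 : 0 < k := by omega
  let c : ℝ → Metric.sphere (0:ℂ) 1 := fun t => ⟨exp (t * I), by simp⟩
  have hc : Continuous c := by fun_prop
  -- `ν (c t)` differs from the continuous branch `exp (t I / k)` by a `k`-th root of unity
  let ζ : ℝ → nthRootsFinset k (1:ℂ) := fun t => ⟨ν (c t) / exp (t * I / k), by
    rw [mem_nthRootsFinset hk0, div_pow, hν, ← exp_nat_mul,
      mul_div_cancel₀ _ (Nat.cast_ne_zero.mpr hk0.ne')]
    exact div_self (exp_ne_zero _)⟩
  have hζc : Continuous ζ :=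
    ((ν.continuous.comp hc).div (by fun_prop) fun _ => exp_ne_zero _).subtype_mk _
  have hζ : ζ 0 = ζ (2 * π) := PreconnectedSpace.constant inferInstance hζc
  have hc2π : c (2 * π) = c 0 := by ext; simp [c, exp_two_pi_mul_I]
  have hν0 : ν (c 0) ≠ 0 := fun h => by
    have := hν (c 0)
    rw [h, zero_pow hk0.ne'] at this
    simp [c] at this
  have hω : exp (2 * π * I / k) = 1 := by
    have := congrArg Subtype.val hζ
    simp only [ζ, hc2π] at this
    rw [ofReal_zero, zero_mul, zero_div, exp_zero, div_one, eq_div_iff (exp_ne_zero _),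
      mul_eq_left₀ hν0] at this
    simpa using this
  have hdvd : k ∣ 1 :=
    ((isPrimitiveRoot_exp k hk0.ne').pow_eq_one_iff_dvd 1).mp (by rw [pow_one, hω])
  have := Nat.dvd_one.mp hdvd
  omega

end Roots

section MatrixUnits

variable {n : Type*} [Fintype n] [DecidableEq n]

theorem map_single_one_ne_zero {R B : Type*} [Semiring R] [Semiring B] [Nontrivial B]
    (φ : Matrix n n R →+* B) (i : n) : φ (single i i 1) ≠ 0 := by
  intro h
  have hone : (1 : Matrix n n R) = ∑ j, single j i 1 * single i i 1 * single i j 1 := by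
    simp [sum_single_eq_diagonal]
  apply one_ne_zero (α := B)
  simp only [← map_one φ, hone, map_sum, map_mul, h, mul_zero, zero_mul, Finset.sum_const_zero]

variable {K : Type*} [Field K]

def frameMatrix (φ : Matrix n n K →ₐ[K] Matrix n n K) (i₀ : n) (ξ : n → K) : Matrix n n K :=
  of fun i j => (φ (single j i₀ 1) *ᵥ ξ) i

theorem det_frameMatrix_ne_zero (φ : Matrix n n K →ₐ[K] Matrix n n K) {i₀ : n} {ξ : n → K}
    (hξ : φ (single i₀ i₀ 1) *ᵥ ξ = ξ) (hξ0 : ξ ≠ 0) : (frameMatrix φ i₀ ξ).det ≠ 0 := by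
  rw [Ne, ← exists_mulVec_eq_zero_iff]
  rintro ⟨c, hc0, hc⟩
  have hW : frameMatrix φ i₀ ξ *ᵥ c = φ (∑ j, c j • single j i₀ 1) *ᵥ ξ := by
    simp only [map_sum, map_smul, sum_mulVec, smul_mulVec]
    ext i
    simp [frameMatrix, mulVec, dotProduct, mul_comm]
  have hcoord : ∀ l, φ (single i₀ l 1) *ᵥ (frameMatrix φ i₀ ξ *ᵥ c) = c l • ξ := by
    intro l
    rw [hW, mulVec_mulVec, ← map_mul, Finset.mul_sum, Finset.sum_eq_single l]
    · simp only [mul_smul_comm, single_mul_single_same, one_mul, map_smul, smul_mulVec, hξ]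
    · intro j _ hj; simp [hj.symm]
    · simp
  refine hc0 (funext fun l => ?_)
  have := hcoord l
  rw [hc, mulVec_zero] at this
  exact (smul_eq_zero.mp this.symm).resolve_right hξ0

end MatrixUnits

section Twist

open Metric

variable {n : Type*} [Fintype n] [DecidableEq n]

theorem star_mul_self_of_mem_sphere (y : sphere (0:ℂ) 1) : star (y : ℂ) * y = 1 := by
  simp [Complex.conj_mul', mem_sphere_zero_iff_norm.mp y.2]

def twistUnitary (i : n) (y : sphere (0:ℂ) 1) : unitary (Matrix n n ℂ) :=
  ⟨diagonal (Pi.mulSingle i (y : ℂ) : n → ℂ), by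
    have hd : ∀ j, star ((Pi.mulSingle i (y : ℂ) : n → ℂ) j) * (Pi.mulSingle i (y : ℂ) : n → ℂ) j
        = 1 := by
      intro j
      rcases eq_or_ne j i with rfl | h
      · rw [Pi.mulSingle_eq_same]; exact star_mul_self_of_mem_sphere y
      · simp [h]
    rw [Unitary.mem_iff, star_eq_conjTranspose, diagonal_conjTranspose, diagonal_mul_diagonal,
      diagonal_mul_diagonal]
    simp_rw [Pi.star_apply, hd, mul_comm _ (star _), hd]
    exact ⟨diagonal_one, diagonal_one⟩⟩

def twistHom (i : n) : Matrix n n ℂ →⋆ₐ[ℂ] C(sphere (0:ℂ) 1, Matrix n n ℂ) where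
  toFun a := ⟨fun y => Unitary.conjStarAlgAut ℂ _ (twistUnitary i y) a, by
    simp only [Unitary.conjStarAlgAut_apply, twistUnitary, star_eq_conjTranspose]
    have : Continuous fun y : sphere (0:ℂ) 1 => (Pi.mulSingle i (y : ℂ) : n → ℂ) := by
      refine continuous_pi fun j => ?_
      rcases eq_or_ne j i with rfl | h
      · simpa using continuous_subtype_val
      · simpa [h] using continuous_const
    fun_prop⟩
  map_one' := by ext1; simp [-Unitary.conjStarAlgAut_apply]
  map_mul' _ _ := by ext1; simp [-Unitary.conjStarAlgAut_apply]
  map_zero' := by ext1; simp [-Unitary.conjStarAlgAut_apply]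
  map_add' _ _ := by ext1; simp [-Unitary.conjStarAlgAut_apply]
  commutes' r := ContinuousMap.ext fun y =>
    AlgHomClass.commutes (Unitary.conjStarAlgAut ℂ (Matrix n n ℂ) (twistUnitary i y)) r
  map_star' a := ContinuousMap.ext fun y =>
    map_star (Unitary.conjStarAlgAut ℂ (Matrix n n ℂ) (twistUnitary i y)) a

theorem twistHom_single (i : n) (y : sphere (0:ℂ) 1) (a b : n) :
    twistHom i (single a b 1) y =
      ((Pi.mulSingle i (y : ℂ) : n → ℂ) a * star ((Pi.mulSingle i (y : ℂ) : n → ℂ) b)) •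
        single a b 1 := by
  ext r s
  simp [twistHom, twistUnitary, star_eq_conjTranspose, diagonal_conjTranspose, single]
  split_ifs with h
  · obtain ⟨rfl, rfl⟩ := h
    simp [Pi.mulSingle_apply, apply_ite (starRingEnd ℂ)]
  · rfl

end Twist

instance : ContractibleSpace (Metric.closedBall (0:ℂ) 1) :=
  Metric.contractibleSpace_closedBall zero_le_one

instance : LocallyPathConnectedSpace (Metric.closedBall (0:ℂ) 1) :=
  (convex_closedBall 0 1).locallyPathConnectedSpace

section Obstruction

open Metric

variable {n : Type*} [Fintype n] [DecidableEq n]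

def fiberHom {X : Type*} [TopologicalSpace X] (ψ : Matrix n n ℂ →⋆ₐ[ℂ] C(X, Matrix n n ℂ))
    (x : X) : Matrix n n ℂ →ₐ[ℂ] Matrix n n ℂ :=
  (Pi.evalAlgHom ℂ (fun _ => Matrix n n ℂ) x).comp ((ContinuousMap.coeFnAlgHom ℂ).comp ψ.toAlgHom)

@[simp]
theorem fiberHom_apply {X : Type*} [TopologicalSpace X]
    (ψ : Matrix n n ℂ →⋆ₐ[ℂ] C(X, Matrix n n ℂ)) (x : X) (a : Matrix n n ℂ) :
    fiberHom ψ x a = ψ a x := rfl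

theorem fiberHom_twistHom_single_self {i i₀ : n} (hi : i₀ ≠ i) (y : sphere (0:ℂ) 1) :
    fiberHom (twistHom i) y (single i₀ i₀ 1) = single i₀ i₀ 1 := by
  simp [twistHom_single, Pi.mulSingle_eq_of_ne hi]

theorem frameMatrix_fiberHom_twistHom {i i₀ : n} (hi : i₀ ≠ i) (y : sphere (0:ℂ) 1) (c : ℂ) :
    frameMatrix (fiberHom (twistHom i) y) i₀ (Pi.single i₀ c) =
      diagonal fun j => (Pi.mulSingle i (y : ℂ) : n → ℂ) j * c := by
  ext r j
  simp [frameMatrix, twistHom_single, Pi.mulSingle_eq_of_ne hi, diagonal_apply]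
  rcases eq_or_ne r j with rfl | h
  · simp
  · simp [single_apply_of_row_ne h.symm, h]

theorem not_forall_comp_setIncl_eq_twistHom {i i₀ : n} (hi : i₀ ≠ i)
    (ᾱ : Matrix n n ℂ →⋆ₐ[ℂ] C(closedBall (0:ℂ) 1, Matrix n n ℂ)) :
    ¬ ∀ a, (ᾱ a).comp (setIncl sphere_subset_closedBall) = twistHom i a := by
  intro hext
  have : Nonempty n := ⟨i⟩
  let ι : C(sphere (0:ℂ) 1, closedBall (0:ℂ) 1) := setIncl sphere_subset_closedBall
  have hbd : ∀ y, fiberHom ᾱ (ι y) = fiberHom (twistHom i) y := fun y =>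
    AlgHom.ext fun a => DFunLike.congr_fun (hext a) y
  obtain ⟨ξ, hξ⟩ := exists_isNonvanishingSection_of_contractible (ᾱ (single i₀ i₀ 1))
    (fun z => by simp only [← fiberHom_apply, ← map_mul, single_mul_single_same, one_mul])
    (fun z => map_single_one_ne_zero (fiberHom ᾱ z).toRingHom i₀)
  let F : C(closedBall (0:ℂ) 1, ℂ) := ⟨fun z => (frameMatrix (fiberHom ᾱ z) i₀ (ξ z)).det,
    (continuous_matrix fun r j => (continuous_apply r).comp
      ((ᾱ (single j i₀ 1)).continuous.matrix_mulVec ξ.continuous)).matrix_det⟩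
  obtain ⟨R, hR⟩ := exists_continuous_pow_eq F
    (fun z => det_frameMatrix_ne_zero _ (hξ z).1 (hξ z).2) (Fintype.card_ne_zero (α := n))
  have hξbd : ∀ y, ξ (ι y) = Pi.single i₀ (ξ (ι y) i₀) := fun y => by
    conv_lhs => rw [← (hξ (ι y)).1, ← fiberHom_apply, hbd, fiberHom_twistHom_single_self hi]
    simp [single_mulVec, Pi.single]
  have hξi₀ : ∀ y, ξ (ι y) i₀ ≠ 0 := fun y h => (hξ (ι y)).2 (by rw [hξbd y, h, Pi.single_zero])
  have hF : ∀ y, F (ι y) = y * ξ (ι y) i₀ ^ Fintype.card n := fun y => by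
    change (frameMatrix (fiberHom ᾱ (ι y)) i₀ (ξ (ι y))).det = _
    rw [hbd, hξbd y, frameMatrix_fiberHom_twistHom hi, det_diagonal, Finset.prod_mul_distrib,
      Finset.prod_pi_mulSingle', Finset.prod_const]
    simp
  refine not_exists_continuous_pow_eq_coe_sphere (Fintype.one_lt_card_iff.mpr ⟨i₀, i, hi⟩)
    ⟨⟨fun y => R (ι y) / ξ (ι y) i₀, (R.continuous.comp ι.continuous).div
      ((continuous_apply i₀).comp (ξ.continuous.comp ι.continuous)) hξi₀⟩, fun y => ?_⟩
  rw [ContinuousMap.coe_mk, div_pow, hR, hF, mul_div_cancel_right₀ _ (pow_ne_zero _ (hξi₀ y))]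

end Obstruction

/-- For every `k ≥ 2` there is a unital homomorphism `α : M_k(ℂ) → M_k(C(S¹))` which admits
no unital extension `ᾱ : M_k(ℂ) → M_k(C(D))` over the closed unit disk `D` with
`π ∘ ᾱ = α`, where `π` is restriction to the boundary circle. -/
theorem stmt8 (k : ℕ) (hk : 2 ≤ k) :
    ∃ α : Mat k →⋆ₐ[ℂ] C(↥(Metric.sphere (0:ℂ) 1), Mat k),
      ∀ ᾱ : Mat k →⋆ₐ[ℂ] C(↥(Metric.closedBall (0:ℂ) 1), Mat k),
        ¬ (∀ a : Mat k, (ᾱ a).comp (setIncl Metric.sphere_subset_closedBall) = α a) :=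
  ⟨twistHom ⟨0, by omega⟩,
    not_forall_comp_setIncl_eq_twistHom (i₀ := ⟨1, hk⟩) (by simp [Fin.ext_iff])⟩
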